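/- Let f(n) satisfy f(n) → ∞ and f(n) = o(log log n), let p = (log n + f(n))/n, and let G ~ G(n,p). Then with high probability |Small(G) ∪ N(Small(G))| ≤ n^{0.6}, where N(Small(G)) is the external neighbourhood of Small(G). -/

import Mathlib

open MeasureTheory Filter

/-- Bernoulli measure on `Bool` with success probability (the truncation to `[0,1]` of) `p`. -/
noncomputable def bernoulliPMF (p : ℝ) : PMF Bool :=
  PMF.bernoulli (min (Real.toNNReal p) 1) (min_le_right _ _)

/-- The Erdős–Rényi measure `G(n,p)`: each potential edge (element of `Sym2 (Fin n)`)
is present independently with probability `p`. -/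
noncomputable def erMeasure (n : ℕ) (p : ℝ) : Measure (Sym2 (Fin n) → Bool) :=
  Measure.pi fun _ => (bernoulliPMF p).toMeasure

instance (n : ℕ) (p : ℝ) : IsProbabilityMeasure (erMeasure n p) := by
  unfold erMeasure; infer_instance

/-- The simple graph on `Fin n` encoded by an edge-indicator function. -/
def graphOfFun {n : ℕ} (f : Sym2 (Fin n) → Bool) : SimpleGraph (Fin n) where
  Adj u v := u ≠ v ∧ f s(u, v) = true
  symm := ⟨fun u v ⟨h1, h2⟩ => ⟨h1.symm, by rwa [Sym2.eq_swap]⟩⟩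
  loopless := ⟨fun u ⟨h1, _⟩ => h1 rfl⟩
/-- The external neighbourhood of a vertex set `U`. -/
def extNbhd {V : Type*} (G : SimpleGraph V) (U : Set V) : Set V :=
  {v | v ∉ U ∧ ∃ u ∈ U, G.Adj u v}

/-- The degree of a vertex. -/
noncomputable def deg {V : Type*} (G : SimpleGraph V) (v : V) : ℕ :=
  (G.neighborSet v).ncard

/-- The number of neighbours of `v` inside the set `S`. -/
noncomputable def degIn {V : Type*} (G : SimpleGraph V) (v : V) (S : Set V) : ℕ :=
  (G.neighborSet v ∩ S).ncard

/-- The number of edges of `G` with one endpoint in `U` and the other in `W`. -/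
noncomputable def edgesBetween {V : Type*} (G : SimpleGraph V) (U W : Set V) : ℕ :=
  {e ∈ G.edgeSet | ∃ u ∈ U, ∃ w ∈ W, e = s(u, w)}.ncard

/-- The number of edges of `G` spanned by `U`. -/
noncomputable def edgesWithin {V : Type*} (G : SimpleGraph V) (U : Set V) : ℕ :=
  {e ∈ G.edgeSet | ∃ u ∈ U, ∃ w ∈ U, e = s(u, w)}.ncard

/-- `Small(G)`: vertices of degree at most `log n / 10`. -/
def smallSet {n : ℕ} (G : SimpleGraph (Fin n)) : Set (Fin n) :=
  {v | (deg G v : ℝ) ≤ Real.log n / 10}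

noncomputable def gammaC : ℝ := 1 / 10000

/-! Let `k = ⌊log n / 10⌋`. For `p ≥ log n / n` the degree of a vertex is a sum of `n - 1`
independent Bernoulli variables of mean at least `log n / n`, so Markov's inequality for
`e^{-2 deg}` bounds the probability that the vertex is small by `exp (4/5 - 3 log n / 5)`.
Hence `𝔼 |Small(G)| ≤ e^{4/5} n^{2/5}`, and by Markov's inequality once more
`|Small(G)| < n^{0.6} / (k + 1)` with probability at least `1 - (k + 1) e^{4/5} n^{-1/5}`.
Every small vertex contributes itself and at most `k` neighbours to `Small(G) ∪ N(Small(G))`,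
which therefore has at most `n^{0.6}` vertices. -/

open Finset

lemma PMF.integral_bool (ν : PMF Bool) (f : Bool → ℝ) :
    ∫ b, f b ∂ν.toMeasure = (ν true).toReal * f true + (1 - (ν true).toReal) * f false := by
  have hsum : (ν true).toReal + (ν false).toReal = 1 := by
    rw [← ENNReal.toReal_add (ν.apply_ne_top _) (ν.apply_ne_top _),
      ← Fintype.sum_bool (fun b => ν b), ← tsum_fintype (L := .unconditional _), ν.tsum_coe,
      ENNReal.toReal_one]
  rw [PMF.integral_eq_sum, Fintype.sum_bool, smul_eq_mul, smul_eq_mul, ← hsum]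
  ring

section BernoulliProduct

variable {ι : Type*} [Fintype ι] (ν : PMF Bool)

lemma pow_mul_measureReal_card_filter_le (E : Finset ι) (k : ℕ) {t : ℝ} (ht0 : 0 < t)
    (ht1 : t ≤ 1) :
    t ^ k * (Measure.pi fun _ : ι => ν.toMeasure).real {g | #{e ∈ E | g e} ≤ k} ≤
      (1 - (ν true).toReal * (1 - t)) ^ #E := by
  classical
  set w : ι → Bool → ℝ := fun e b => if e ∈ E then (if b then t else 1) else 1
  have hw (g : ι → Bool) : ∏ e, w e (g e) = t ^ #{e ∈ E | g e} := by
    rw [Finset.prod_ite_mem, Finset.univ_inter, Finset.prod_ite, Finset.prod_const,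
      Finset.prod_const_one, mul_one]
  have hw_integral (e : ι) :
      ∫ b, w e b ∂ν.toMeasure = if e ∈ E then 1 - (ν true).toReal * (1 - t) else 1 := by
    by_cases he : e ∈ E
    · simp only [w, if_pos he, PMF.integral_bool, if_true, Bool.false_eq_true, if_false]
      ring
    · simp only [w, if_neg he, integral_const, probReal_univ, smul_eq_mul, mul_one]
  -- Markov's inequality for `t ^ #{e ∈ E | g e}`, whose mean factorises over the coordinates.
  calc t ^ k * (Measure.pi fun _ : ι => ν.toMeasure).real {g | #{e ∈ E | g e} ≤ k}
      ≤ t ^ k * (Measure.pi fun _ : ι => ν.toMeasure).real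
          {g | t ^ k ≤ ∏ e, w e (g e)} := by
        refine mul_le_mul_of_nonneg_left (measureReal_mono fun g hg => ?_) (by positivity)
        rw [Set.mem_ofPred_eq, hw]
        exact pow_le_pow_of_le_one ht0.le ht1 hg
    _ ≤ ∫ g, ∏ e, w e (g e) ∂(Measure.pi fun _ : ι => ν.toMeasure) :=
        mul_meas_ge_le_integral_of_nonneg
          (Eventually.of_forall fun g => by simp only [hw, Pi.zero_apply]; positivity)
          Integrable.of_finite _
    _ = ∏ e, ∫ b, w e b ∂ν.toMeasure := integral_fintype_prod_eq_prod _
    _ = (1 - (ν true).toReal * (1 - t)) ^ #E := by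
        simp only [hw_integral]
        rw [Finset.prod_ite_mem, Finset.univ_inter, Finset.prod_const]

lemma measureReal_card_filter_le_le_exp (E : Finset ι) (k : ℕ) {a : ℝ} (ha : 0 ≤ a) :
    (Measure.pi fun _ : ι => ν.toMeasure).real {g | #{e ∈ E | g e} ≤ k} ≤
      Real.exp (a * k - (1 - Real.exp (-a)) * (ν true).toReal * #E) := by
  set q := (ν true).toReal
  have hq1 : q ≤ 1 :=
    ENNReal.toReal_le_of_le_ofReal zero_le_one (by simpa using ν.coe_le_one true)
  have hexp1 : Real.exp (-a) ≤ 1 := Real.exp_le_one_iff.mpr (by linarith)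
  have hbase : 0 ≤ 1 - q * (1 - Real.exp (-a)) := by
    nlinarith [ENNReal.toReal_nonneg (a := ν true), Real.exp_pos (-a)]
  have hchernoff := pow_mul_measureReal_card_filter_le ν E k (Real.exp_pos (-a)) hexp1
  rw [← Real.exp_nat_mul, mul_neg, Real.exp_neg, ← div_eq_inv_mul,
    div_le_iff₀' (Real.exp_pos _), mul_comm (k : ℝ)] at hchernoff
  calc (Measure.pi fun _ : ι => ν.toMeasure).real {g | #{e ∈ E | g e} ≤ k}
      ≤ Real.exp (a * k) * (1 - q * (1 - Real.exp (-a))) ^ #E := hchernoff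
    _ ≤ Real.exp (a * k) * Real.exp (-(q * (1 - Real.exp (-a)))) ^ #E := by
        gcongr
        linarith [Real.add_one_le_exp (-(q * (1 - Real.exp (-a))))]
    _ = Real.exp (a * k - (1 - Real.exp (-a)) * q * #E) := by
        rw [← Real.exp_nat_mul, ← Real.exp_add]
        ring_nf

end BernoulliProduct

lemma mul_measureReal_le_ncard_le_sum {Ω V : Type*} [MeasurableSpace Ω] [Finite Ω]
    [MeasurableSingletonClass Ω] [Fintype V] (μ : Measure Ω) [IsFiniteMeasure μ]
    (A : V → Set Ω) (s : ℝ) :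
    s * μ.real {ω | s ≤ {v | ω ∈ A v}.ncard} ≤ ∑ v, μ.real (A v) := by
  classical
  have hcount (ω : Ω) : ({v | ω ∈ A v}.ncard : ℝ) = ∑ v, (A v).indicator 1 ω := by
    rw [Set.ncard_eq_toFinset_card', Set.toFinset_ofPred, Finset.card_filter]
    push_cast
    simp [Set.indicator_apply]
  calc s * μ.real {ω | s ≤ {v | ω ∈ A v}.ncard}
      ≤ ∫ ω, ({v | ω ∈ A v}.ncard : ℝ) ∂μ :=
        mul_meas_ge_le_integral_of_nonneg (Eventually.of_forall fun _ => by positivity)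
          Integrable.of_finite _
    _ = ∑ v, μ.real (A v) := by
        simp only [hcount]
        rw [integral_finsetSum _ fun _ _ => Integrable.of_finite]
        simp [integral_indicator_one (Set.toFinite _).measurableSet]

lemma ncard_union_extNbhd_le {V : Type*} [Finite V] (G : SimpleGraph V) (U : Set V) (d : ℕ)
    (hU : ∀ u ∈ U, deg G u ≤ d) : (U ∪ extNbhd G U).ncard ≤ U.ncard * (d + 1) := by
  have hcover :
      U ∪ extNbhd G U ⊆ ⋃ u ∈ U.toFinite.toFinset, insert u (G.neighborSet u) := by
    rintro x (hx | ⟨-, u, hu, hux⟩) <;> simp only [Set.mem_iUnion, Set.Finite.mem_toFinset]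
    · exact ⟨x, hx, Set.mem_insert x _⟩
    · exact ⟨u, hu, Set.mem_insert_of_mem u hux⟩
  calc (U ∪ extNbhd G U).ncard
      ≤ (⋃ u ∈ U.toFinite.toFinset, insert u (G.neighborSet u)).ncard :=
        Set.ncard_le_ncard hcover (Set.toFinite _)
    _ ≤ ∑ u ∈ U.toFinite.toFinset, (insert u (G.neighborSet u)).ncard :=
        Finset.set_ncard_biUnion_le _ _
    _ ≤ ∑ _u ∈ U.toFinite.toFinset, (d + 1) := by
        refine Finset.sum_le_sum fun u hu => (Set.ncard_insert_le _ _).trans ?_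
        exact Nat.add_le_add_right (hU u ((Set.Finite.mem_toFinset _).mp hu)) 1
    _ = U.ncard * (d + 1) := by
        rw [Finset.sum_const, smul_eq_mul, ← Set.ncard_eq_toFinset_card]

lemma graphOfFun_eq_fromEdgeSet {n : ℕ} (g : Sym2 (Fin n) → Bool) :
    graphOfFun g = SimpleGraph.fromEdgeSet {e | g e} := by
  ext u v
  simp [graphOfFun, SimpleGraph.fromEdgeSet_adj, and_comm]

lemma deg_graphOfFun {n : ℕ} (g : Sym2 (Fin n) → Bool) (v : Fin n) :
    deg (graphOfFun g) v = #{e ∈ (⊤ : SimpleGraph (Fin n)).incidenceFinset v | g e} := by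
  classical
  rw [deg, Set.ncard_eq_toFinset_card', Set.toFinset_card,
    SimpleGraph.card_neighborSet_eq_degree, ← SimpleGraph.card_incidenceFinset_eq_degree]
  congr 1
  ext e
  simp [SimpleGraph.mem_incidenceFinset, SimpleGraph.incidenceSet, graphOfFun_eq_fromEdgeSet,
    SimpleGraph.edgeSet_fromEdgeSet, SimpleGraph.edgeSet_top]
  tauto

lemma card_incidenceFinset_top {V : Type*} [Fintype V] [DecidableEq V] (v : V) :
    #((⊤ : SimpleGraph V).incidenceFinset v) = Fintype.card V - 1 := by
  rw [SimpleGraph.card_incidenceFinset_eq_degree, ← SimpleGraph.complete_graph_degree]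

lemma mem_smallSet_iff {n : ℕ} (G : SimpleGraph (Fin n)) (v : Fin n) :
    v ∈ smallSet G ↔ deg G v ≤ ⌊Real.log n / 10⌋₊ :=
  (Nat.le_floor_iff (div_nonneg (Real.log_natCast_nonneg n) (by norm_num))).symm

lemma bernoulliPMF_true_toReal {p : ℝ} (hp : 0 ≤ p) :
    (bernoulliPMF p true).toReal = min p 1 := by
  simp only [bernoulliPMF, PMF.bernoulli_apply, cond_true]
  rw [ENNReal.coe_toReal, NNReal.coe_min, Real.coe_toNNReal _ hp, NNReal.coe_one]

lemma erMeasure_real_mem_smallSet_le {n : ℕ} (hn : 0 < n) {p : ℝ} (hp : Real.log n / n ≤ p)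
    (v : Fin n) :
    (erMeasure n p).real {g | v ∈ smallSet (graphOfFun g)} ≤
      Real.exp (4 / 5 - 3 * Real.log n / 5) := by
  set L := Real.log n
  set k := ⌊L / 10⌋₊
  have hn' : (0 : ℝ) < n := Nat.cast_pos.mpr hn
  have hk : (k : ℝ) ≤ L / 10 := Nat.floor_le (by positivity)
  have hLn : L / n ≤ 1 :=
    (div_le_one hn').mpr ((Real.log_le_sub_one_of_pos hn').trans (by linarith))
  have hq : L / n ≤ min p 1 := le_min hp hLn
  have hqn : L - 1 ≤ min p 1 * ((n - 1 : ℕ) : ℝ) := by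
    rw [Nat.cast_sub hn, Nat.cast_one, mul_sub, mul_one]
    have := mul_le_mul_of_nonneg_right hq hn'.le
    rw [div_mul_cancel₀ _ hn'.ne'] at this
    linarith [min_le_right p 1]
  have hqn_nonneg : 0 ≤ min p 1 * ((n - 1 : ℕ) : ℝ) :=
    mul_nonneg (le_min (le_trans (by positivity) hp) zero_le_one) (Nat.cast_nonneg _)
  have he2 : Real.exp (-2) ≤ 1 / 5 := by
    rw [Real.exp_neg, inv_eq_one_div]
    gcongr
    linarith [Real.quadratic_le_exp_of_nonneg (x := 2) (by norm_num)]
  have hset : {g : Sym2 (Fin n) → Bool | v ∈ smallSet (graphOfFun g)} =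
      {g | #{e ∈ (⊤ : SimpleGraph (Fin n)).incidenceFinset v | g e} ≤ k} := by
    ext g
    rw [Set.mem_ofPred_eq, mem_smallSet_iff, deg_graphOfFun]
    rfl
  rw [hset]
  refine (measureReal_card_filter_le_le_exp _ _ k zero_le_two).trans (Real.exp_le_exp.mpr ?_)
  rw [bernoulliPMF_true_toReal (le_trans (by positivity) hp), card_incidenceFinset_top,
    Fintype.card_fin]
  -- `2 k ≤ L / 5` and `(1 - e⁻²) · min p 1 · (n - 1) ≥ 4 / 5 · (L - 1)`
  nlinarith [mul_nonneg (sub_nonneg.mpr he2) hqn_nonneg]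

lemma erMeasure_real_ncard_union_extNbhd_gt_le {n : ℕ} (hn : 0 < n) {p : ℝ}
    (hp : Real.log n / n ≤ p) :
    (erMeasure n p).real {g | (n : ℝ) ^ (0.6 : ℝ) < ((smallSet (graphOfFun g) ∪
        extNbhd (graphOfFun g) (smallSet (graphOfFun g))).ncard : ℝ)} ≤
      (Real.log n / 10 + 1) * Real.exp (4 / 5 - Real.log n / 5) := by
  set L := Real.log n
  set k := ⌊L / 10⌋₊
  set s : ℝ := (n : ℝ) ^ (0.6 : ℝ) / (k + 1)
  have hn' : (0 : ℝ) < n := Nat.cast_pos.mpr hn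
  have hk : (k : ℝ) ≤ L / 10 :=
    Nat.floor_le (div_nonneg (Real.log_natCast_nonneg n) (by norm_num))
  have hs : 0 < s := by positivity
  have hsub : {g : Sym2 (Fin n) → Bool | (n : ℝ) ^ (0.6 : ℝ) < ((smallSet (graphOfFun g) ∪
      extNbhd (graphOfFun g) (smallSet (graphOfFun g))).ncard : ℝ)} ⊆
      {g | s ≤ (smallSet (graphOfFun g)).ncard} := by
    intro g hg
    have hcard := ncard_union_extNbhd_le (graphOfFun g) (smallSet (graphOfFun g)) k
      fun u hu => (mem_smallSet_iff _ u).mp hu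
    rw [Set.mem_ofPred_eq, div_le_iff₀ (by positivity)]
    exact hg.le.trans (by exact_mod_cast hcard)
  have hmean : ∑ v : Fin n, (erMeasure n p).real {g | v ∈ smallSet (graphOfFun g)} ≤
      n * Real.exp (4 / 5 - 3 * L / 5) := by
    simpa using Finset.sum_le_card_nsmul Finset.univ _ _ fun v _ =>
      erMeasure_real_mem_smallSet_le hn hp v
  have hmarkov := (mul_measureReal_le_ncard_le_sum (erMeasure n p)
    (fun v => {g | v ∈ smallSet (graphOfFun g)}) s).trans hmean
  calc _ ≤ (erMeasure n p).real {g | s ≤ (smallSet (graphOfFun g)).ncard} :=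
        measureReal_mono hsub
    _ ≤ n * Real.exp (4 / 5 - 3 * L / 5) / s := (le_div_iff₀' hs).mpr hmarkov
    _ = (k + 1) * Real.exp (4 / 5 - L / 5) := by
        have hn_exp : (n : ℝ) = Real.exp L := (Real.exp_log hn').symm
        simp only [s]
        rw [Real.rpow_def_of_pos hn', hn_exp, Real.log_exp]
        field_simp
        rw [← Real.exp_add, ← Real.exp_add]
        ring_nf
    _ ≤ (L / 10 + 1) * Real.exp (4 / 5 - L / 5) := by gcongr

lemma tendsto_div_add_one_mul_exp :
    Tendsto (fun x : ℝ => (x / 10 + 1) * Real.exp (4 / 5 - x / 5)) atTop (nhds 0) := by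
  have h1 := tendsto_rpow_mul_exp_neg_mul_atTop_nhds_zero 1 (1 / 5) (by norm_num)
  have h0 := tendsto_rpow_mul_exp_neg_mul_atTop_nhds_zero 0 (1 / 5) (by norm_num)
  convert ((h1.const_mul (1 / 10)).add h0).const_mul (Real.exp (4 / 5)) using 1
  · ext x
    rw [Real.rpow_one, Real.rpow_zero, sub_eq_add_neg, Real.exp_add]
    ring_nf
  · simp

lemma tendsto_measure_of_measureReal_compl_le {α : Type*} {l : Filter α} {Ω : α → Type*}
    [∀ i, MeasurableSpace (Ω i)] (μ : ∀ i, Measure (Ω i))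
    [∀ i, IsProbabilityMeasure (μ i)]
    {A : ∀ i, Set (Ω i)} (hA : ∀ i, MeasurableSet (A i)) {b : α → ℝ}
    (hb : Tendsto b l (nhds 0)) (h : ∀ᶠ i in l, (μ i).real (A i)ᶜ ≤ b i) :
    Tendsto (fun i => μ i (A i)) l (nhds 1) := by
  have hreal : Tendsto (fun i => (μ i).real (A i)) l (nhds 1) := by
    refine tendsto_of_tendsto_of_tendsto_of_le_of_le' (by simpa using hb.const_sub 1)
      tendsto_const_nhds ?_ (Eventually.of_forall fun i => measureReal_le_one)
    filter_upwards [h] with i hi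
    rw [probReal_compl_eq_one_sub (hA i)] at hi
    linarith
  simpa [ofReal_measureReal] using ENNReal.tendsto_ofReal hreal

open Asymptotics in
theorem gnp_small_union_nbhd_general (f : ℕ → ℝ) (hf : Tendsto f atTop atTop) :
    Tendsto (fun n : ℕ => erMeasure n ((Real.log n + f n) / n)
        {fe | (((smallSet (graphOfFun fe) ∪ extNbhd (graphOfFun fe) (smallSet (graphOfFun fe))).ncard : ℝ)
            ≤ (n : ℝ) ^ (0.6 : ℝ))})
      atTop (nhds 1) := by
  refine tendsto_measure_of_measureReal_compl_le (fun n => erMeasure n _)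
    (fun n => (Set.toFinite _).measurableSet)
    (tendsto_div_add_one_mul_exp.comp
      (Real.tendsto_log_atTop.comp tendsto_natCast_atTop_atTop)) ?_
  filter_upwards [hf.eventually_ge_atTop 0, eventually_gt_atTop 0] with n hfn hn
  simp only [Set.compl_ofPred, not_le]
  exact erMeasure_real_ncard_union_extNbhd_gt_le hn (by gcongr; linarith)

open Asymptotics in
/-- **(P4)**: whp `|Small(G) ∪ N(Small(G))| ≤ n^0.6`. -/
theorem gnp_small_union_nbhd (f : ℕ → ℝ) (hf : Tendsto f atTop atTop)
    (hf' : f =o[atTop] fun n : ℕ => Real.log (Real.log n)) :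
    Tendsto (fun n : ℕ => erMeasure n ((Real.log n + f n) / n)
        {fe | (((smallSet (graphOfFun fe) ∪ extNbhd (graphOfFun fe) (smallSet (graphOfFun fe))).ncard : ℝ)
            ≤ (n : ℝ) ^ (0.6 : ℝ))})
      atTop (nhds 1) :=
  gnp_small_union_nbhd_general f hf
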